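/- arXiv:1407.3230 — 2 statements merged into one kernel-verified Lean document; each statement's English description precedes it below -/
import Mathlib

section
/- If F ⊆ 2^[n] is shattering-extremal, then the inclusion graph of F is isometrically embedded in the hypercube: for all A, B ∈ F there exist sets A = C₀, C₁, ..., C_k = B, all belonging to F, with k = |A △ B| and |C_{j-1} △ C_j| = 1 for every j = 1, ..., k. -/
open scoped symmDiff

/-- `𝓕` shatters `S`: every subset of `S` is the trace of some member of `𝓕` on `S`. -/
def Shatters {n : ℕ} (𝓕 : Finset (Finset (Fin n))) (S : Finset (Fin n)) : Prop :=
  ∀ T ⊆ S, ∃ F ∈ 𝓕, F ∩ S = T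

/-- `𝓕` strongly shatters `S`: there is `I ⊆ [n] \ S` with `{H ∪ I : H ⊆ S} ⊆ 𝓕`. -/
def StronglyShatters {n : ℕ} (𝓕 : Finset (Finset (Fin n))) (S : Finset (Fin n)) : Prop :=
  ∃ I : Finset (Fin n), I ⊆ Sᶜ ∧ ∀ H ⊆ S, H ∪ I ∈ 𝓕

open Classical in
/-- The family of subsets of `[n]` shattered by `𝓕`. -/
noncomputable def Sh {n : ℕ} (𝓕 : Finset (Finset (Fin n))) : Finset (Finset (Fin n)) :=
  Finset.univ.filter (Shatters 𝓕)

open Classical in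
/-- The family of subsets of `[n]` strongly shattered by `𝓕`. -/
noncomputable def st {n : ℕ} (𝓕 : Finset (Finset (Fin n))) : Finset (Finset (Fin n)) :=
  Finset.univ.filter (StronglyShatters 𝓕)

/-- `𝓕` is shattering-extremal if it shatters exactly `|𝓕|` sets. -/
def Extremal {n : ℕ} (𝓕 : Finset (Finset (Fin n))) : Prop :=
  (Sh 𝓕).card = 𝓕.card

/-- The Vapnik–Chervonenkis dimension: the maximum cardinality of a shattered set. -/
noncomputable def dimVC {n : ℕ} (𝓕 : Finset (Finset (Fin n))) : ℕ :=
  (Sh 𝓕).sup Finset.card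

/-!
Extremality passes to the subfamily of members avoiding a point `y` (Pajor's counting is then
tight) and to every translate `A ∆ 𝓕`. An extremal family with members both containing and
avoiding `y` contains a pair `W`, `insert y W`: otherwise down-compressing along `y` keeps its
size but loses the shattered set `{y}`. Induction on the family then shows that if `∅, B ∈ 𝓕`
and `B ≠ ∅`, some singleton `{x} ⊆ B` lies in `𝓕`. Translating by `A`, every `A ≠ B` in `𝓕`
has a neighbour `A ∆ {x} ∈ 𝓕` one step closer to `B`, and iterating gives the geodesic.
-/

open Finset
open scoped FinsetFamily

namespace Finset

variable {α : Type*} [DecidableEq α] {𝒜 : Finset (Finset α)} {s A B X Y : Finset α} {a : α}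

def IsShatteringExtremal (𝒜 : Finset (Finset α)) : Prop :=
  #𝒜.shatterer = #𝒜

lemma Shatters.notMem_of_forall_notMem (h : ∀ t ∈ 𝒜, a ∉ t) (hs : 𝒜.Shatters s) : a ∉ s := by
  obtain ⟨u, hu, hsu⟩ := hs.exists_superset
  exact notMem_mono hsu (h u hu)

lemma Shatters.of_memberSubfamily (hs : (𝒜.memberSubfamily a).Shatters s) : 𝒜.Shatters s := by
  have ha : a ∉ s := hs.notMem_of_forall_notMem fun t ht ↦ (mem_memberSubfamily.1 ht).2
  intro t ht
  obtain ⟨u, hu, rfl⟩ := hs ht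
  exact ⟨insert a u, (mem_memberSubfamily.1 hu).1, inter_insert_of_notMem ha⟩

lemma Shatters.insert_of_memberSubfamily_of_nonMemberSubfamily
    (h₁ : (𝒜.memberSubfamily a).Shatters s) (h₀ : (𝒜.nonMemberSubfamily a).Shatters s) :
    𝒜.Shatters (insert a s) := by
  intro t ht
  rw [subset_insert_iff] at ht
  by_cases ha : a ∈ t
  · obtain ⟨u, hu, hsu⟩ := h₁ ht
    rw [mem_memberSubfamily] at hu
    exact ⟨_, hu.1, by rw [← insert_inter_distrib, hsu, insert_erase ha]⟩
  · obtain ⟨u, hu, hsu⟩ := h₀ ht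
    rw [mem_nonMemberSubfamily] at hu
    exact ⟨_, hu.1, by rwa [insert_inter_of_notMem hu.2, hsu, erase_eq_self]⟩

lemma card_shatterer_memberSubfamily_add_card_shatterer_nonMemberSubfamily_le
    (a : α) (𝒜 : Finset (Finset α)) :
    #(𝒜.memberSubfamily a).shatterer + #(𝒜.nonMemberSubfamily a).shatterer ≤ #𝒜.shatterer := by
  set 𝒮₁ := (𝒜.memberSubfamily a).shatterer
  set 𝒮₀ := (𝒜.nonMemberSubfamily a).shatterer
  have hfree : ∀ s ∈ 𝒮₁ ∪ 𝒮₀, a ∉ s := by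
    simp only [𝒮₁, 𝒮₀, mem_union, mem_shatterer]
    rintro s (hs | hs)
    exacts [hs.notMem_of_forall_notMem fun t ht ↦ (mem_memberSubfamily.1 ht).2,
      hs.notMem_of_forall_notMem fun t ht ↦ (mem_nonMemberSubfamily.1 ht).2]
  have hcard : #((𝒮₁ ∩ 𝒮₀).image (insert a)) = #(𝒮₁ ∩ 𝒮₀) :=
    card_image_of_injOn fun s hs t ht hst ↦ by
      rw [← erase_insert (hfree s (mem_union_left _ (mem_inter.1 hs).1)),
        ← erase_insert (hfree t (mem_union_left _ (mem_inter.1 ht).1)), hst]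
  have hdisj : Disjoint (𝒮₁ ∪ 𝒮₀) ((𝒮₁ ∩ 𝒮₀).image (insert a)) := by
    rw [disjoint_left]
    intro _ hs hs'
    obtain ⟨t, -, rfl⟩ := mem_image.1 hs'
    exact hfree _ hs (mem_insert_self a t)
  have hsub : (𝒮₁ ∪ 𝒮₀) ∪ (𝒮₁ ∩ 𝒮₀).image (insert a) ⊆ 𝒜.shatterer := by
    refine union_subset (union_subset ?_ ?_) ?_ <;> intro s hs
    · exact mem_shatterer.2 (mem_shatterer.1 hs).of_memberSubfamily
    · exact mem_shatterer.2 ((mem_shatterer.1 hs).mono_left (filter_subset _ _))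
    · obtain ⟨t, ht, rfl⟩ := mem_image.1 hs
      rw [mem_inter, mem_shatterer, mem_shatterer] at ht
      exact mem_shatterer.2 (ht.1.insert_of_memberSubfamily_of_nonMemberSubfamily ht.2)
  calc #𝒮₁ + #𝒮₀ = #(𝒮₁ ∪ 𝒮₀) + #(𝒮₁ ∩ 𝒮₀) := (card_union_add_card_inter _ _).symm
    _ = #((𝒮₁ ∪ 𝒮₀) ∪ (𝒮₁ ∩ 𝒮₀).image (insert a)) := by
      rw [card_union_of_disjoint hdisj, hcard]
    _ ≤ #𝒜.shatterer := card_le_card hsub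

lemma IsShatteringExtremal.nonMemberSubfamily (h : 𝒜.IsShatteringExtremal) (a : α) :
    (𝒜.nonMemberSubfamily a).IsShatteringExtremal := by
  have := card_le_card_shatterer (𝒜.memberSubfamily a)
  have := card_le_card_shatterer (𝒜.nonMemberSubfamily a)
  have := card_memberSubfamily_add_card_nonMemberSubfamily a 𝒜
  have := card_shatterer_memberSubfamily_add_card_shatterer_nonMemberSubfamily_le a 𝒜
  unfold IsShatteringExtremal at h ⊢
  omega

lemma shatters_singleton_of_mem_of_notMem (hX : X ∈ 𝒜) (haX : a ∈ X) (hY : Y ∈ 𝒜)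
    (haY : a ∉ Y) : 𝒜.Shatters {a} := by
  intro t ht
  obtain rfl | rfl := subset_singleton_iff.1 ht
  exacts [⟨Y, hY, singleton_inter_of_notMem haY⟩, ⟨X, hX, singleton_inter_of_mem haX⟩]

lemma IsShatteringExtremal.exists_insert_mem (h : 𝒜.IsShatteringExtremal) (hX : X ∈ 𝒜)
    (haX : a ∈ X) (hY : Y ∈ 𝒜) (haY : a ∉ Y) : ∃ W ∈ 𝒜, a ∉ W ∧ insert a W ∈ 𝒜 := by
  by_contra! hno
  have hfree : ∀ s ∈ 𝓓 a 𝒜, a ∉ s := by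
    intro s hs has
    rcases Down.mem_compression.1 hs with ⟨hs𝒜, hs'⟩ | ⟨hs', his⟩
    · exact hno _ hs' (notMem_erase a s) (by rw [insert_erase has]; exact hs𝒜)
    · exact hs' (by rwa [insert_eq_of_mem has] at his)
  have heq : (𝓓 a 𝒜).shatterer = 𝒜.shatterer := by
    refine eq_of_subset_of_card_le (shatterer_compress_subset_shatterer a 𝒜) ?_
    rw [h, ← Down.card_compression a 𝒜]
    exact card_le_card_shatterer _
  have hs : (𝓓 a 𝒜).Shatters {a} := by
    rw [← mem_shatterer, heq, mem_shatterer]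
    exact shatters_singleton_of_mem_of_notMem hX haX hY haY
  exact hs.notMem_of_forall_notMem hfree (mem_singleton_self a)

lemma Shatters.image_symmDiff (hs : 𝒜.Shatters s) (A : Finset α) :
    (𝒜.image (A ∆ ·)).Shatters s := by
  intro t ht
  obtain ⟨u, hu, hsu⟩ := hs (symmDiff_le (le_sup_of_le_right inter_subset_left)
    (le_sup_of_le_right ht) : (s ∩ A) ∆ t ⊆ s)
  refine ⟨A ∆ u, mem_image_of_mem _ hu, ?_⟩
  rw [show s ∩ A ∆ u = (s ∩ A) ∆ (s ∩ u) from inf_symmDiff_distrib_left s A u, hsu,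
    symmDiff_symmDiff_cancel_left]

lemma shatterer_image_symmDiff (A : Finset α) (𝒜 : Finset (Finset α)) :
    (𝒜.image (A ∆ ·)).shatterer = 𝒜.shatterer := by
  ext s
  simp only [mem_shatterer]
  refine ⟨fun hs ↦ ?_, fun hs ↦ hs.image_symmDiff A⟩
  simpa [image_image, Function.comp_def] using hs.image_symmDiff A

lemma IsShatteringExtremal.image_symmDiff (h : 𝒜.IsShatteringExtremal) (A : Finset α) :
    (𝒜.image (A ∆ ·)).IsShatteringExtremal := by
  rw [IsShatteringExtremal, shatterer_image_symmDiff,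
    card_image_of_injective _ (symmDiff_right_injective A)]
  exact h

lemma IsShatteringExtremal.exists_singleton_mem (h : 𝒜.IsShatteringExtremal) (h₀ : ∅ ∈ 𝒜)
    (hB : B ∈ 𝒜) (hBne : B.Nonempty) : ∃ x ∈ B, {x} ∈ 𝒜 := by
  induction 𝒜 using Finset.strongInduction generalizing B with
  | H 𝒜 ih =>
    have hrestrict : ∀ y, ∀ X ∈ 𝒜, y ∈ X → ∀ W ∈ 𝒜, y ∉ W → W.Nonempty →
        ∃ x ∈ W, {x} ∈ 𝒜 := by
      intro y X hX hyX W hW hyW hWne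
      have hss : 𝒜.nonMemberSubfamily y ⊂ 𝒜 := filter_ssubset.2 ⟨X, hX, not_not.2 hyX⟩
      obtain ⟨x, hxW, hx⟩ := ih _ hss (h.nonMemberSubfamily y)
        (mem_nonMemberSubfamily.2 ⟨h₀, notMem_empty y⟩) (mem_nonMemberSubfamily.2 ⟨hW, hyW⟩)
        hWne
      exact ⟨x, hxW, (mem_nonMemberSubfamily.1 hx).1⟩
    by_cases hout : ∃ X ∈ 𝒜, ¬X ⊆ B
    · obtain ⟨X, hX, hXB⟩ := hout
      obtain ⟨y, hyX, hyB⟩ := not_subset.1 hXB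
      exact hrestrict y X hX hyX B hB hyB hBne
    · have hsub : ∀ X ∈ 𝒜, X ⊆ B := fun X hX ↦ by_contra fun hXB ↦ hout ⟨X, hX, hXB⟩
      obtain ⟨y, hyB⟩ := hBne
      obtain ⟨W, hW, hyW, hyW'⟩ := h.exists_insert_mem hB hyB h₀ (notMem_empty y)
      obtain rfl | hWne := W.eq_empty_or_nonempty
      · exact ⟨y, hyB, hyW'⟩
      · obtain ⟨x, hxW, hx⟩ := hrestrict y B hB hyB W hW hyW hWne
        exact ⟨x, hsub W hW hxW, hx⟩

lemma IsShatteringExtremal.exists_symmDiff_singleton_mem (h : 𝒜.IsShatteringExtremal)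
    (hA : A ∈ 𝒜) (hB : B ∈ 𝒜) (hAB : A ≠ B) : ∃ x ∈ A ∆ B, A ∆ {x} ∈ 𝒜 := by
  have h₀ : ∅ ∈ 𝒜.image (A ∆ ·) := mem_image.2 ⟨A, hA, symmDiff_self A⟩
  have hne : (A ∆ B).Nonempty := nonempty_iff_ne_empty.2 (symmDiff_eq_bot.not.2 hAB)
  obtain ⟨x, hx, hx'⟩ :=
    (h.image_symmDiff A).exists_singleton_mem h₀ (mem_image_of_mem _ hB) hne
  obtain ⟨Y, hY, hYx⟩ := mem_image.1 hx'
  refine ⟨x, hx, ?_⟩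
  rwa [← hYx, symmDiff_symmDiff_cancel_left]

lemma symmDiff_singleton_of_mem (h : a ∈ s) : s ∆ {a} = s.erase a := by
  ext b
  by_cases hb : b = a <;> simp [mem_symmDiff, hb, h]

lemma exists_geodesic_of_forall_exists_step
    (hstep : ∀ A ∈ 𝒜, ∀ B ∈ 𝒜, A ≠ B → ∃ x ∈ A ∆ B, A ∆ {x} ∈ 𝒜) :
    ∀ A ∈ 𝒜, ∀ B ∈ 𝒜, ∃ C : ℕ → Finset α, C 0 = A ∧ C #(A ∆ B) = B ∧
      (∀ j ≤ #(A ∆ B), C j ∈ 𝒜) ∧ (∀ j, 1 ≤ j → j ≤ #(A ∆ B) → #(C (j - 1) ∆ C j) = 1) := by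
  suffices ∀ k, ∀ A ∈ 𝒜, ∀ B ∈ 𝒜, #(A ∆ B) = k → ∃ C : ℕ → Finset α, C 0 = A ∧ C k = B ∧
      (∀ j ≤ k, C j ∈ 𝒜) ∧ (∀ j, 1 ≤ j → j ≤ k → #(C (j - 1) ∆ C j) = 1) from
    fun A hA B hB ↦ this _ A hA B hB rfl
  intro k
  induction k with
  | zero =>
    intro A hA B hB hAB
    obtain rfl : A = B := symmDiff_eq_bot.1 (card_eq_zero.1 hAB)
    exact ⟨fun _ ↦ A, rfl, rfl, fun _ _ ↦ hA, fun j hj hj' ↦ by omega⟩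
  | succ k ih =>
    intro A hA B hB hAB
    obtain ⟨x, hx, hxA⟩ := hstep A hA B hB fun h ↦ by simp [h] at hAB
    have hk : #((A ∆ {x}) ∆ B) = k := by
      rw [symmDiff_right_comm, symmDiff_singleton_of_mem hx, card_erase_of_mem hx, hAB]
      rfl
    obtain ⟨C, hC0, hCk, hC𝒜, hCstep⟩ := ih _ hxA B hB hk
    refine ⟨fun | 0 => A | j + 1 => C j, rfl, hCk, ?_, ?_⟩
    · rintro (_ | j) hj
      exacts [hA, hC𝒜 j (by omega)]
    · rintro (_ | _ | j) hj hj'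
      · omega
      · simp [hC0]
      · exact hCstep (j + 1) (by omega) (by omega)

end Finset

lemma extremal_iff_isShatteringExtremal {n : ℕ} (𝓕 : Finset (Finset (Fin n))) :
    Extremal 𝓕 ↔ 𝓕.IsShatteringExtremal := by
  have hSh : Sh 𝓕 = 𝓕.shatterer := by
    ext S
    simp [Sh, _root_.Shatters, Finset.Shatters, inter_comm]
  rw [Extremal, Finset.IsShatteringExtremal, hSh]

/-- The inclusion graph of a shattering-extremal family is isometrically embedded in
the hypercube: any two members are joined inside `𝓕` by a path of length `|A ∆ B|`
whose consecutive members differ in exactly one element. -/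
theorem extremal_isometrically_embedded (n : ℕ) (𝓕 : Finset (Finset (Fin n)))
    (h : Extremal 𝓕) :
    ∀ A ∈ 𝓕, ∀ B ∈ 𝓕, ∃ C : ℕ → Finset (Fin n),
      C 0 = A ∧ C ((A ∆ B).card) = B ∧
      (∀ j ≤ (A ∆ B).card, C j ∈ 𝓕) ∧
      (∀ j, 1 ≤ j → j ≤ (A ∆ B).card → ((C (j - 1)) ∆ (C j)).card = 1) := by
  have hF := (extremal_iff_isShatteringExtremal 𝓕).1 h
  exact exists_geodesic_of_forall_exists_step fun A hA B hB hAB ↦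
    hF.exists_symmDiff_singleton_mem hA hB hAB
end

section
/- Let F ⊆ 2^[n] be shattering-extremal, let V ⊆ [n] with V ∉ F, and suppose there is a set S ⊆ [n] that is strongly shattered by F ∪ {V} but not strongly shattered by F. Then F ∪ {V} is shattering-extremal and Sh(F ∪ {V}) = Sh(F) ∪ {S}; in particular the VC dimension of F ∪ {V} is at most max(dim_VC(F), |S|). -/
open scoped symmDiff

/-!
For a shattering-extremal family `𝒜` every shattered set is strongly shattered. Split `𝒜` at a
point `a` into its projection `𝒜.image (erase · a)` and its reduction `𝒜ᵃ`: the sets shattered by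
`𝒜` include those shattered by the projection and, disjointly, `insert a s` for every `s`
shattered by `𝒜ᵃ`. Since `#𝒜` is the sum of the sizes of the two parts, Pajor's inequality for
both forces equality, so `𝒜ᵃ` is again extremal and induction on the shattered set applies.

Now let `S` be strongly shattered by `insert V 𝓕` through a cube `{H ∪ I | H ⊆ S}`, but not by
`𝓕`. Then `V` lies in the cube, hence so does `V ∆ {x}` for `x ∈ S`, which is therefore in `𝓕`.
If `T` is shattered by `insert V 𝓕` but not by `𝓕`, the trace `T ∩ V` is missing from `𝓕`. So
`S ⊆ T`, as otherwise `V ∆ {x}` has that trace; and `T ⊆ S`, as otherwise `𝓕` shatters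
`T.erase y ⊇ S` and extremality makes `S` strongly shattered by `𝓕`.
-/

open scoped FinsetFamily

namespace Finset

variable {α : Type*} [DecidableEq α] {𝒜 𝒢 : Finset (Finset α)} {s V : Finset α} {a : α}

/-- The reduction `𝒜ᵃ` of `𝒜` at `a`: the sets `s ∌ a` with both `s, insert a s ∈ 𝒜`. -/
def reduction (a : α) (𝒜 : Finset (Finset α)) : Finset (Finset α) :=
  𝒜.memberSubfamily a ∩ 𝒜.nonMemberSubfamily a

lemma mem_reduction : s ∈ 𝒜.reduction a ↔ s ∈ 𝒜 ∧ insert a s ∈ 𝒜 ∧ a ∉ s := by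
  simp only [reduction, mem_inter, mem_memberSubfamily, mem_nonMemberSubfamily]
  tauto

lemma card_image_erase_add_card_reduction (a : α) (𝒜 : Finset (Finset α)) :
    #(𝒜.image (erase · a)) + #(𝒜.reduction a) = #𝒜 := by
  rw [reduction, ← memberSubfamily_union_nonMemberSubfamily, card_union_add_card_inter,
    card_memberSubfamily_add_card_nonMemberSubfamily]

lemma notMem_of_shatters (h : ∀ u ∈ 𝒜, a ∉ u) (hs : 𝒜.Shatters s) : a ∉ s := by
  obtain ⟨u, hu, hsu⟩ := hs.exists_superset
  exact fun ha ↦ h u hu (hsu ha)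

lemma notMem_of_shatters_image_erase (hs : (𝒜.image (erase · a)).Shatters s) : a ∉ s :=
  notMem_of_shatters (by simp) hs

lemma notMem_of_shatters_reduction (hs : (𝒜.reduction a).Shatters s) : a ∉ s :=
  notMem_of_shatters (fun _ hu ↦ (mem_reduction.1 hu).2.2) hs

lemma Shatters.of_image_erase (hs : (𝒜.image (erase · a)).Shatters s) : 𝒜.Shatters s := by
  intro t ht
  obtain ⟨_, ⟨u, hu, rfl⟩, hsu⟩ := by simpa only [mem_image] using hs ht
  refine ⟨u, hu, ?_⟩
  rwa [inter_erase, erase_eq_of_notMem fun h ↦ notMem_of_shatters_image_erase hs (mem_inter.1 h).1]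
    at hsu

lemma Shatters.insert_of_reduction (hs : (𝒜.reduction a).Shatters s) :
    𝒜.Shatters (insert a s) := by
  intro t ht
  by_cases hat : a ∈ t
  · obtain ⟨u, hu, hsu⟩ := hs (subset_insert_iff.1 ht)
    refine ⟨insert a u, (mem_reduction.1 hu).2.1, ?_⟩
    rw [← insert_inter_distrib, hsu, insert_erase hat]
  · obtain ⟨u, hu, hsu⟩ := hs ((subset_insert_iff_of_notMem hat).1 ht)
    refine ⟨u, (mem_reduction.1 hu).1, ?_⟩
    rw [insert_inter_of_notMem (mem_reduction.1 hu).2.2, hsu]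

lemma shatterer_image_erase_union_image_insert_subset (a : α) (𝒜 : Finset (Finset α)) :
    (𝒜.image (erase · a)).shatterer ∪ (𝒜.reduction a).shatterer.image (insert a) ⊆
      𝒜.shatterer := by
  refine union_subset (fun s hs ↦ ?_) (forall_mem_image.2 fun s hs ↦ ?_) <;>
    rw [mem_shatterer] at hs ⊢
  exacts [hs.of_image_erase, hs.insert_of_reduction]

lemma card_shatterer_image_erase_union_image_insert (a : α) (𝒜 : Finset (Finset α)) :
    #((𝒜.image (erase · a)).shatterer ∪ (𝒜.reduction a).shatterer.image (insert a)) =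
      #(𝒜.image (erase · a)).shatterer + #(𝒜.reduction a).shatterer := by
  rw [card_union_of_disjoint, card_image_of_injOn]
  · exact insert_erase_invOn.2.injOn.mono fun s hs ↦
      notMem_of_shatters_reduction (mem_shatterer.1 hs)
  · simp only [disjoint_left, mem_image, not_exists, not_and]
    rintro _ hs s - rfl
    exact notMem_of_shatters_image_erase (mem_shatterer.1 hs) (mem_insert_self a s)

lemma card_le_card_shatterer_image_erase_union_image_insert (a : α) (𝒜 : Finset (Finset α)) :
    #𝒜 ≤ #((𝒜.image (erase · a)).shatterer ∪ (𝒜.reduction a).shatterer.image (insert a)) := by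
  rw [card_shatterer_image_erase_union_image_insert, ← card_image_erase_add_card_reduction a]
  exact Nat.add_le_add (card_le_card_shatterer _) (card_le_card_shatterer _)

lemma shatterer_eq_union_of_card_shatterer_eq (a : α) (h : #𝒜.shatterer = #𝒜) :
    𝒜.shatterer =
      (𝒜.image (erase · a)).shatterer ∪ (𝒜.reduction a).shatterer.image (insert a) :=
  (eq_of_subset_of_card_le (shatterer_image_erase_union_image_insert_subset a 𝒜)
    (h ▸ card_le_card_shatterer_image_erase_union_image_insert a 𝒜)).symm

lemma card_shatterer_reduction_of_card_shatterer_eq (a : α) (h : #𝒜.shatterer = #𝒜) :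
    #(𝒜.reduction a).shatterer = #(𝒜.reduction a) := by
  have hX := card_shatterer_image_erase_union_image_insert a 𝒜
  rw [← shatterer_eq_union_of_card_shatterer_eq a h, h,
    ← card_image_erase_add_card_reduction a] at hX
  have := card_le_card_shatterer (𝒜.image (erase · a))
  have := card_le_card_shatterer (𝒜.reduction a)
  omega

lemma Shatters.reduction_of_card_shatterer_eq (h : #𝒜.shatterer = #𝒜)
    (hs : 𝒜.Shatters (insert a s)) (ha : a ∉ s) : (𝒜.reduction a).Shatters s := by
  have hmem := mem_shatterer.2 hs
  rw [shatterer_eq_union_of_card_shatterer_eq a h, mem_union, mem_image] at hmem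
  rcases hmem with hs' | ⟨t, ht, hts⟩
  · exact absurd (mem_insert_self a s) (notMem_of_shatters_image_erase (mem_shatterer.1 hs'))
  · rw [mem_shatterer] at ht
    rwa [← erase_insert ha, ← hts, erase_insert (notMem_of_shatters_reduction ht)]

theorem Shatters.exists_disjoint_forall_union_mem_of_card_shatterer_eq
    (h : #𝒜.shatterer = #𝒜) (hs : 𝒜.Shatters s) :
    ∃ I, Disjoint I s ∧ ∀ H ⊆ s, H ∪ I ∈ 𝒜 := by
  induction s using Finset.induction_on generalizing 𝒜 with
  | empty =>
    obtain ⟨I, hI⟩ := hs.nonempty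
    exact ⟨I, disjoint_empty_right I, fun H hH ↦ by rwa [subset_empty.1 hH, empty_union]⟩
  | insert a s ha ih =>
    obtain ⟨I, hIs, hI⟩ := ih (card_shatterer_reduction_of_card_shatterer_eq a h)
      (hs.reduction_of_card_shatterer_eq h ha)
    have haI : a ∉ I := by simpa using (mem_reduction.1 (hI ∅ (empty_subset s))).2.2
    refine ⟨I, disjoint_insert_right.2 ⟨haI, hIs⟩, fun H hH ↦ ?_⟩
    by_cases haH : a ∈ H
    · have := (mem_reduction.1 (hI (H.erase a) (subset_insert_iff.1 hH))).2.1
      rwa [← insert_union, insert_erase haH] at this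
    · exact (mem_reduction.1 (hI H ((subset_insert_iff_of_notMem haH).1 hH))).1

lemma Shatters.of_insert (h : (insert V 𝒢).Shatters s) (hV : ∃ G ∈ 𝒢, s ∩ G = s ∩ V) :
    𝒢.Shatters s := by
  intro t ht
  obtain ⟨u, hu, hsu⟩ := h ht
  rcases mem_insert.1 hu with rfl | hu
  · obtain ⟨G, hG, hsG⟩ := hV
    exact ⟨G, hG, hsG.trans hsu⟩
  · exact ⟨u, hu, hsu⟩

lemma Shatters.erase_of_insert (h : (insert V 𝒢).Shatters s) (ha : a ∈ s) :
    𝒢.Shatters (s.erase a) := by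
  have h𝒢 : ∀ t ⊆ s, (a ∈ t ↔ a ∉ V) → ∃ u ∈ 𝒢, s ∩ u = t := by
    intro t ht hat
    obtain ⟨u, hu, hsu⟩ := h ht
    refine ⟨u, (mem_insert.1 hu).resolve_left ?_, hsu⟩
    rintro rfl
    have : a ∈ t ↔ a ∈ u := by rw [← hsu, mem_inter, and_iff_right ha]
    tauto
  intro t ht
  have hat : a ∉ t := fun hat ↦ notMem_erase a s (ht hat)
  have hts : t ⊆ s := ht.trans (erase_subset a s)
  by_cases haV : a ∈ V
  · obtain ⟨u, hu, hsu⟩ := h𝒢 t hts (by tauto)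
    exact ⟨u, hu, by rw [erase_inter, hsu, erase_eq_of_notMem hat]⟩
  · obtain ⟨u, hu, hsu⟩ := h𝒢 (insert a t) (insert_subset ha hts) (by simp [haV])
    exact ⟨u, hu, by rw [erase_inter, hsu, erase_insert hat]⟩

end Finset

section

variable {n : ℕ} {𝓕 : Finset (Finset (Fin n))} {S T V : Finset (Fin n)}

lemma shatters_iff_shatters : Shatters 𝓕 S ↔ 𝓕.Shatters S :=
  forall₂_congr fun _ _ ↦ by simp only [Finset.inter_comm]

lemma Sh_eq_shatterer (𝓕 : Finset (Finset (Fin n))) : Sh 𝓕 = 𝓕.shatterer := by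
  ext S
  simp [Sh, shatters_iff_shatters]

lemma StronglyShatters.shatters (h : StronglyShatters 𝓕 S) : 𝓕.Shatters S := by
  obtain ⟨I, hI, hcube⟩ := h
  intro H hH
  refine ⟨H ∪ I, hcube H hH, ?_⟩
  rw [Finset.inter_union_distrib_left, Finset.inter_eq_right.2 hH,
    Finset.disjoint_iff_inter_eq_empty.1 (Finset.subset_compl_iff_disjoint_left.1 hI),
    Finset.union_empty]

lemma Extremal.stronglyShatters_of_shatters (h : Extremal 𝓕) (hS : 𝓕.Shatters S) :
    StronglyShatters 𝓕 S := by
  rw [Extremal, Sh_eq_shatterer] at h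
  obtain ⟨I, hIS, hI⟩ := hS.exists_disjoint_forall_union_mem_of_card_shatterer_eq h
  exact ⟨I, Finset.subset_compl_iff_disjoint_right.2 hIS, hI⟩

lemma symmDiff_singleton_mem_of_stronglyShatters_insert
    (hnew : StronglyShatters (insert V 𝓕) S) (hold : ¬ StronglyShatters 𝓕 S)
    {x : Fin n} (hx : x ∈ S) : V ∆ {x} ∈ 𝓕 := by
  obtain ⟨I, hIS, hcube⟩ := hnew
  have hdisj : Disjoint I S := Finset.subset_compl_iff_disjoint_right.1 hIS
  -- The sets `H ∪ I` with `H ⊆ S` are exactly the sets `W` with `W \ S = I`.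
  have sdiff_cube : ∀ H ⊆ S, (H ∪ I) \ S = I := fun H hH ↦ by
    rw [Finset.union_sdiff_distrib, Finset.sdiff_eq_empty_iff_subset.2 hH, Finset.empty_union,
      Finset.sdiff_eq_self_of_disjoint hdisj]
  have mem_cube : ∀ W, W \ S = I → W ∈ insert V 𝓕 := fun W hW ↦ by
    convert hcube (W ∩ S) Finset.inter_subset_right
    rw [← hW]
    exact (sup_inf_sdiff W S).symm
  have hVS : V \ S = I := by
    by_contra hVS
    exact hold ⟨I, hIS, fun H hH ↦ (Finset.mem_insert.1 (hcube H hH)).resolve_left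
      fun hV ↦ hVS (hV ▸ sdiff_cube H hH)⟩
  have hxV : (V ∆ {x}) \ S = V \ S := by
    ext a
    by_cases hax : a = x <;> simp [Finset.mem_symmDiff, hax, hx]
  refine (Finset.mem_insert.1 (mem_cube _ (hxV.trans hVS))).resolve_left ?_
  simp [symmDiff_eq_left]

lemma eq_of_shatters_insert_of_not_shatters (h : Extremal 𝓕)
    (hnew : StronglyShatters (insert V 𝓕) S) (hold : ¬ StronglyShatters 𝓕 S)
    (hT : (insert V 𝓕).Shatters T) (hT𝓕 : ¬ 𝓕.Shatters T) : T = S := by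
  have hST : S ⊆ T := fun x hxS ↦ by
    by_contra hxT
    refine hT𝓕 (hT.of_insert ⟨V ∆ {x}, symmDiff_singleton_mem_of_stronglyShatters_insert
      hnew hold hxS, ?_⟩)
    ext a
    by_cases hax : a = x <;> simp [Finset.mem_symmDiff, hax, hxT]
  refine Finset.Subset.antisymm (fun y hyT ↦ ?_) hST
  by_contra hyS
  exact hold (h.stronglyShatters_of_shatters
    ((hT.erase_of_insert hyT).mono_right (Finset.subset_erase.2 ⟨hST, hyS⟩)))

lemma Sh_insert_eq (h : Extremal 𝓕) (hnew : StronglyShatters (insert V 𝓕) S)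
    (hold : ¬ StronglyShatters 𝓕 S) : Sh (insert V 𝓕) = insert S (Sh 𝓕) := by
  ext T
  simp only [Sh_eq_shatterer, Finset.mem_insert, Finset.mem_shatterer]
  refine ⟨fun hT ↦ ?_, ?_⟩
  · by_cases hT𝓕 : 𝓕.Shatters T
    exacts [Or.inr hT𝓕, Or.inl (eq_of_shatters_insert_of_not_shatters h hnew hold hT hT𝓕)]
  · rintro (rfl | hT)
    exacts [hnew.shatters, hT.mono_left (Finset.subset_insert V 𝓕)]

end

/-- Adding to a shattering-extremal family a new set which strongly shatters exactly
one new set `S` keeps the family shattering-extremal; the family of shattered sets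
grows exactly by `S`, and the VC dimension is at most `max (dimVC 𝓕) |S|`. -/
theorem insert_extremal_of_new_strongly_shattered (n : ℕ)
    (𝓕 : Finset (Finset (Fin n))) (h : Extremal 𝓕)
    (V : Finset (Fin n)) (hV : V ∉ 𝓕) (S : Finset (Fin n))
    (hnew : StronglyShatters (insert V 𝓕) S) (hold : ¬ StronglyShatters 𝓕 S) :
    Extremal (insert V 𝓕) ∧ Sh (insert V 𝓕) = insert S (Sh 𝓕) ∧
      dimVC (insert V 𝓕) ≤ max (dimVC 𝓕) S.card := by
  have hSh := Sh_insert_eq h hnew hold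
  have hS : S ∉ Sh 𝓕 := fun hS ↦ hold (h.stronglyShatters_of_shatters
    (by rwa [Sh_eq_shatterer, Finset.mem_shatterer] at hS))
  refine ⟨?_, hSh, ?_⟩
  · rw [Extremal, hSh, Finset.card_insert_of_notMem hS, Finset.card_insert_of_notMem hV, h]
  · rw [dimVC, hSh, Finset.sup_insert, max_comm, dimVC]
end
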